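/- arXiv:1906.01405 — 2 statements merged into one kernel-verified Lean document; each statement's English description precedes it below -/
import Mathlib

section
/- Let (Ω, 𝓕, μ) be a probability space, n, m ≥ 1, and let f ∈ L²(Ω^n, μ^⊗n) have mean zero (E f = 0). Define F ∈ L²(Ω^{mn}, μ^⊗mn) by F(x) = Π_{i=1}^m f(x_{(i−1)n+1}, …, x_{in}) (the m-fold tensor power of f on consecutive blocks of n coordinates). Then P_m F = (P_1 f)^{⊗ m}, i.e. (P_m F)(x) = Π_{i=1}^m (P_1 f)(x_{(i−1)n+1}, …, x_{in}) almost everywhere. -/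
open MeasureTheory
open scoped NNReal ENNReal

noncomputable def piMeasure {Ω : Type*} [MeasurableSpace Ω] (μ : Measure Ω) (N : ℕ) :
    Measure (Fin N → Ω) := Measure.pi fun _ => μ

def coordSigma (Ω : Type*) [MeasurableSpace Ω] (N : ℕ) (B : Finset (Fin N)) :
    MeasurableSpace (Fin N → Ω) :=
  ⨆ i ∈ B, MeasurableSpace.comap (fun x => x i) inferInstance

/-- Conditional expectation `E_B` with respect to the coordinates in `B`. -/
noncomputable def condExpCoords {Ω : Type*} [MeasurableSpace Ω] (μ : Measure Ω) {N : ℕ}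
    {E : Type*} [NormedAddCommGroup E] [NormedSpace ℝ E] [CompleteSpace E]
    (B : Finset (Fin N)) (f : (Fin N → Ω) → E) : (Fin N → Ω) → E :=
  MeasureTheory.condExp (coordSigma Ω N B) (piMeasure μ N) f

/-- The Hoeffding projection `P_A f = Σ_{B ⊆ A} (−1)^{|A∖B|} E_B f`. -/
noncomputable def hoeffdingProj {Ω : Type*} [MeasurableSpace Ω] (μ : Measure Ω) {N : ℕ}
    {E : Type*} [NormedAddCommGroup E] [NormedSpace ℝ E] [CompleteSpace E]
    (A : Finset (Fin N)) (f : (Fin N → Ω) → E) : (Fin N → Ω) → E :=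
  ∑ B ∈ A.powerset, ((-1 : ℝ) ^ (A.card - B.card)) • condExpCoords μ B f

/-- `P_m f = Σ_{|A| = m} P_A f`. -/
noncomputable def hoeffdingSum {Ω : Type*} [MeasurableSpace Ω] (μ : Measure Ω) {N : ℕ}
    {E : Type*} [NormedAddCommGroup E] [NormedSpace ℝ E] [CompleteSpace E]
    (m : ℕ) (f : (Fin N → Ω) → E) : (Fin N → Ω) → E :=
  ∑ A ∈ Finset.univ.filter (fun A : Finset (Fin N) => A.card = m), hoeffdingProj μ A f

/-!
The conditional expectation `E_B` integrates out the coordinates outside `B`. For the block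
product `F = f^{⊗m}` this integral factorises over the blocks, `E_B F = ∏ᵢ E_{Bᵢ} f` with `Bᵢ`
the part of `B` in block `i`, and `E_∅ f = E f = 0`. Hence `E_B F = 0` as soon as `B` misses a
block, in particular when `|B| < m`. So for `|A| = m` only the top term `B = A` of `P_A F`
survives, and it vanishes unless `A` is a transversal `{(i, tᵢ)}` choosing one coordinate in each
block. Therefore `P_m F = Σ_t ∏ᵢ E_{{tᵢ}} f = ∏ᵢ Σ_j E_{{j}} f = ∏ᵢ P_1 f`.
-/

namespace MeasureTheory

variable {E : Type*} [NormedAddCommGroup E] [NormedSpace ℝ E] [CompleteSpace E]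

theorem condExp_comap_fst_ae_eq_integral {α β : Type*} [mα : MeasurableSpace α]
    [MeasurableSpace β] {ν₁ : Measure α} {ν₂ : Measure β}
    [IsFiniteMeasure ν₁] [IsProbabilityMeasure ν₂] {g : α × β → E}
    (hg : Integrable g (ν₁.prod ν₂)) :
    (ν₁.prod ν₂)[g | mα.comap Prod.fst] =ᵐ[ν₁.prod ν₂] fun z => ∫ y, g (z.1, y) ∂ν₂ := by
  have hfst : MeasurePreserving Prod.fst (ν₁.prod ν₂) ν₁ := measurePreserving_fst
  have hsection := hg.1.integral_prod_right'
  have hint : Integrable (fun z : α × β => ∫ y, g (z.1, y) ∂ν₂) (ν₁.prod ν₂) :=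
    (hfst.integrable_comp hsection).mpr hg.integral_prod_left
  refine (ae_eq_condExp_of_forall_setIntegral_eq measurable_fst.comap_le hg
    (fun s _ _ => hint.integrableOn) ?_ ?_).symm
  · rintro _ ⟨t, -, rfl⟩ -
    rw [← Set.prod_univ, setIntegral_prod _ hg.integrableOn,
      setIntegral_prod (fun z : α × β => ∫ y, g (z.1, y) ∂ν₂) hint.integrableOn]
    simp
  · have hmk : StronglyMeasurable[mα.comap Prod.fst] (hsection.mk _ ∘ (Prod.fst : α × β → α)) :=
      hsection.stronglyMeasurable_mk.comp_measurable (comap_measurable Prod.fst)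
    exact ⟨_, hmk, hfst.quasiMeasurePreserving.ae_eq_comp hsection.ae_eq_mk⟩

theorem condExp_comp_measurableEquiv {X Y : Type*} [MeasurableSpace X] {m mY : MeasurableSpace Y}
    {μ : Measure X} {ν : Measure Y} [IsFiniteMeasure ν] (e : X ≃ᵐ Y) (he : MeasurePreserving e μ ν)
    (hm : m ≤ mY) {g : Y → E} (hg : Integrable g ν) :
    μ[g ∘ e | m.comap e] =ᵐ[μ] ν[g | m] ∘ e := by
  have : IsFiniteMeasure μ := ⟨by
    rw [← Set.preimage_univ (f := e), he.measure_preimage MeasurableSet.univ.nullMeasurableSet]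
    exact measure_lt_top ν _⟩
  have hcomp {h : Y → E} : Integrable (h ∘ e) μ ↔ Integrable h ν :=
    he.integrable_comp_emb e.measurableEmbedding
  refine (ae_eq_condExp_of_forall_setIntegral_eq
    ((MeasurableSpace.comap_mono hm).trans e.measurable.comap_le) (hcomp.mpr hg)
    (fun s _ _ => (hcomp.mpr integrable_condExp).integrableOn) ?_ ?_).symm
  · rintro _ ⟨t, ht, rfl⟩ -
    simp only [Function.comp_apply]
    rw [he.setIntegral_preimage_emb e.measurableEmbedding,
      he.setIntegral_preimage_emb e.measurableEmbedding, setIntegral_condExp hm hg ht]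
  · exact (stronglyMeasurable_condExp.comp_measurable (comap_measurable e)).aestronglyMeasurable

theorem measurePreserving_curry (ι κ : Type*) [Fintype ι] [Fintype κ] {α : Type*}
    [MeasurableSpace α] (μ : Measure α) [SigmaFinite μ] :
    MeasurePreserving (MeasurableEquiv.curry ι κ α) (Measure.pi fun _ => μ)
      (Measure.pi fun _ => Measure.pi fun _ => μ) := by
  classical
  refine MeasurePreserving.symm _ ⟨(MeasurableEquiv.curry ι κ α).symm.measurable, ?_⟩
  refine (Measure.pi_eq fun s hs => ?_).symm
  have hpre : (MeasurableEquiv.curry ι κ α).symm ⁻¹' Set.univ.pi s =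
      Set.univ.pi fun i => Set.univ.pi fun j => s (i, j) := by
    ext w; simp [MeasurableEquiv.coe_curry_symm]
  rw [MeasurableEquiv.map_apply, hpre, Measure.pi_pi]
  simp_rw [Measure.pi_pi]
  exact (Fintype.prod_prod_type fun p => μ (s p)).symm

end MeasureTheory

namespace Finset

variable {ι M : Type*} [Fintype ι]

theorem sum_alternating_powerset_eq_of_card_lt [AddCommGroup M] [Module ℝ M] (m : ℕ)
    (w : Finset ι → M) (hw : ∀ B : Finset ι, B.card < m → w B = 0) :
    ∑ A ∈ univ.filter (fun A : Finset ι => A.card = m),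
        ∑ B ∈ A.powerset, (-1 : ℝ) ^ (A.card - B.card) • w B =
      ∑ A ∈ univ.filter (fun A : Finset ι => A.card = m), w A := by
  refine sum_congr rfl fun A hA => ?_
  rw [sum_eq_single_of_mem A (mem_powerset_self A), Nat.sub_self, pow_zero, one_smul]
  intro B hB hBA
  have hlt : B.card < m := (mem_filter.mp hA).2 ▸
    card_lt_card (ssubset_iff_subset_ne.mpr ⟨mem_powerset.mp hB, hBA⟩)
  rw [hw B hlt, smul_zero]

theorem sum_filter_card_eq_one [AddCommMonoid M] [DecidableEq ι] (g : Finset ι → M) :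
    ∑ A ∈ univ.filter (fun A : Finset ι => A.card = 1), g A = ∑ j, g {j} := by
  rw [← powerset_univ, ← powersetCard_eq_filter, powersetCard_one, sum_map]
  rfl

end Finset

instance piMeasure.instSigmaFinite {Ω : Type*} [MeasurableSpace Ω] (μ : Measure Ω)
    [SigmaFinite μ] (N : ℕ) : SigmaFinite (piMeasure μ N) := by
  unfold piMeasure; infer_instance

instance piMeasure.instIsProbabilityMeasure {Ω : Type*} [MeasurableSpace Ω] (μ : Measure Ω)
    [IsProbabilityMeasure μ] (N : ℕ) : IsProbabilityMeasure (piMeasure μ N) := by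
  unfold piMeasure; infer_instance

theorem coordSigma_eq_comap (Ω : Type*) [MeasurableSpace Ω] (N : ℕ) (B : Finset (Fin N)) :
    coordSigma Ω N B = (MeasurableSpace.comap Prod.fst inferInstance).comap
      (MeasurableEquiv.piEquivPiSubtypeProd (fun _ => Ω) (· ∈ B)) := by
  rw [MeasurableSpace.comap_comp]
  change _ = MeasurableSpace.comap (fun (x : Fin N → Ω) (i : B) => x i) MeasurableSpace.pi
  rw [coordSigma, MeasurableSpace.pi, MeasurableSpace.comap_iSup, iSup_subtype']
  simp_rw [MeasurableSpace.comap_comp]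
  rfl

noncomputable def integralOutside {Ω : Type*} [MeasurableSpace Ω] (μ : Measure Ω) {N : ℕ}
    {E : Type*} [NormedAddCommGroup E] [NormedSpace ℝ E]
    (B : Finset (Fin N)) (f : (Fin N → Ω) → E) (x : Fin N → Ω) : E :=
  ∫ y, f (B.piecewise x y) ∂(piMeasure μ N)

@[simp]
theorem integralOutside_empty {Ω : Type*} [MeasurableSpace Ω] (μ : Measure Ω) {N : ℕ}
    {E : Type*} [NormedAddCommGroup E] [NormedSpace ℝ E] (f : (Fin N → Ω) → E) :
    integralOutside μ ∅ f = fun _ => ∫ x, f x ∂(piMeasure μ N) := by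
  ext; simp [integralOutside]

noncomputable def blockEquiv (Ω : Type*) [MeasurableSpace Ω] (m n : ℕ) :
    (Fin (m * n) → Ω) ≃ᵐ (Fin m → Fin n → Ω) :=
  (MeasurableEquiv.piCongrLeft (fun _ => Ω) finProdFinEquiv).symm.trans
    (MeasurableEquiv.curry (Fin m) (Fin n) Ω)

def blockSlice {m n : ℕ} (B : Finset (Fin (m * n))) (i : Fin m) : Finset (Fin n) :=
  Finset.univ.filter fun j => finProdFinEquiv (i, j) ∈ B

def transversal {m n : ℕ} (t : Fin m → Fin n) : Finset (Fin (m * n)) :=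
  Finset.univ.image fun i => finProdFinEquiv (i, t i)

section Coordinates

variable {Ω : Type*} [MeasurableSpace Ω] (μ : Measure Ω) {N : ℕ}
  {E : Type*} [NormedAddCommGroup E] [NormedSpace ℝ E] [CompleteSpace E]

theorem condExpCoords_ae_eq_integralOutside [IsProbabilityMeasure μ] (B : Finset (Fin N))
    {f : (Fin N → Ω) → E} (hf : Integrable f (piMeasure μ N)) :
    condExpCoords μ B f =ᵐ[piMeasure μ N] integralOutside μ B f := by
  classical
  set e := MeasurableEquiv.piEquivPiSubtypeProd (fun _ : Fin N => Ω) (· ∈ B)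
  have he : MeasurePreserving e (piMeasure μ N) _ :=
    measurePreserving_piEquivPiSubtypeProd (fun _ => μ) (· ∈ B)
  have hg := (he.symm e).integrable_comp_emb e.symm.measurableEmbedding |>.mpr hf
  have hpiecewise (x y : Fin N → Ω) : B.piecewise x y = e.symm ((e x).1, (e y).2) := by
    ext j; by_cases hj : j ∈ B <;> simp [e, hj]
  have hfe : f = (f ∘ e.symm) ∘ e := by ext; simp
  calc condExpCoords μ B f
      = (piMeasure μ N)[(f ∘ e.symm) ∘ e |
          (MeasurableSpace.comap Prod.fst inferInstance).comap e] := by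
        rw [condExpCoords, coordSigma_eq_comap, ← hfe]
    _ =ᵐ[piMeasure μ N] _ := condExp_comp_measurableEquiv e he measurable_fst.comap_le hg
    _ =ᵐ[piMeasure μ N] (fun z => ∫ y, (f ∘ e.symm) (z.1, y) ∂(Measure.pi fun _ => μ)) ∘ e :=
        he.quasiMeasurePreserving.ae_eq_comp (condExp_comap_fst_ae_eq_integral hg)
    _ = integralOutside μ B f := by
        ext x
        simp only [integralOutside, hpiecewise, Function.comp_apply]
        rw [he.integral_comp' (fun z => f (e.symm ((e x).1, z.2))),
          integral_fun_snd (fun z => f (e.symm ((e x).1, z)))]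
        simp

theorem hoeffdingSum_ae_eq_of_condExpCoords_ae_eq [IsProbabilityMeasure μ] (m : ℕ)
    {f : (Fin N → Ω) → E}
    {g : Finset (Fin N) → (Fin N → Ω) → E}
    (hg : ∀ B, condExpCoords μ B f =ᵐ[piMeasure μ N] g B) :
    hoeffdingSum μ m f =ᵐ[piMeasure μ N]
      ∑ A ∈ Finset.univ.filter (fun A : Finset (Fin N) => A.card = m),
        ∑ B ∈ A.powerset, (-1 : ℝ) ^ (A.card - B.card) • g B := by
  filter_upwards [ae_all_iff.mpr hg] with x hx
  simp only [hoeffdingSum, hoeffdingProj, Finset.sum_apply, Pi.smul_apply, hx]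

theorem hoeffdingSum_one_ae_eq [IsProbabilityMeasure μ] {f : (Fin N → Ω) → E}
    (hf : Integrable f (piMeasure μ N)) (hmean : ∫ x, f x ∂(piMeasure μ N) = 0) :
    hoeffdingSum μ 1 f =ᵐ[piMeasure μ N] ∑ j, integralOutside μ {j} f := by
  classical
  refine (hoeffdingSum_ae_eq_of_condExpCoords_ae_eq μ 1 fun B =>
    condExpCoords_ae_eq_integralOutside μ B hf).trans ?_
  rw [Finset.sum_alternating_powerset_eq_of_card_lt 1 _ fun B hB => by
    rw [Finset.card_eq_zero.mp (Nat.lt_one_iff.mp hB), integralOutside_empty, hmean]; rfl]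
  rw [Finset.sum_filter_card_eq_one]

end Coordinates

section Blocks

variable {Ω : Type*} [MeasurableSpace Ω] {m n : ℕ}

theorem Fin.mk_mul_add_eq_finProdFinEquiv (i : Fin m) (j : Fin n)
    (h : (i : ℕ) * n + j < m * n) : (⟨i * n + j, h⟩ : Fin (m * n)) = finProdFinEquiv (i, j) :=
  Fin.ext <| by rw [finProdFinEquiv_apply_val]; ring

@[simp]
theorem blockEquiv_apply (x : Fin (m * n) → Ω) (i : Fin m) (j : Fin n) :
    blockEquiv Ω m n x i j = x (finProdFinEquiv (i, j)) :=
  rfl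

theorem measurePreserving_blockEquiv (μ : Measure Ω) [SigmaFinite μ] :
    MeasurePreserving (blockEquiv Ω m n) (piMeasure μ (m * n))
      (Measure.pi fun _ => piMeasure μ n) := by
  unfold piMeasure
  exact (measurePreserving_curry (Fin m) (Fin n) μ).comp
    ((measurePreserving_piCongrLeft (fun _ : Fin (m * n) => μ) finProdFinEquiv).symm _)

theorem blockEquiv_piecewise (B : Finset (Fin (m * n))) (x y : Fin (m * n) → Ω) (i : Fin m) :
    blockEquiv Ω m n (B.piecewise x y) i =
      (blockSlice B i).piecewise (blockEquiv Ω m n x i) (blockEquiv Ω m n y i) := by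
  ext j
  by_cases hj : finProdFinEquiv (i, j) ∈ B <;> simp [Finset.piecewise, blockSlice, hj]

theorem integralOutside_prod_blockEquiv {𝕜 : Type*} [RCLike 𝕜] (μ : Measure Ω) [SigmaFinite μ]
    (f : (Fin n → Ω) → 𝕜) (B : Finset (Fin (m * n))) (x : Fin (m * n) → Ω) :
    integralOutside μ B (fun y => ∏ i, f (blockEquiv Ω m n y i)) x =
      ∏ i, integralOutside μ (blockSlice B i) f (blockEquiv Ω m n x i) := by
  simp only [integralOutside, blockEquiv_piecewise]
  rw [(measurePreserving_blockEquiv μ).integral_comp'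
    (fun w => ∏ i, f ((blockSlice B i).piecewise (blockEquiv Ω m n x i) (w i)))]
  exact integral_fintype_prod_eq_prod (μ := fun _ => piMeasure μ n)
    fun i z => f ((blockSlice B i).piecewise (blockEquiv Ω m n x i) z)

theorem blockSlice_transversal (t : Fin m → Fin n) (i : Fin m) :
    blockSlice (transversal t) i = {t i} := by
  ext j; simp [blockSlice, transversal, eq_comm]

theorem transversal_injective : Function.Injective (transversal : (Fin m → Fin n) → _) :=
  fun t t' h => funext fun i => Finset.singleton_injective <| by
    rw [← blockSlice_transversal, h, blockSlice_transversal]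

theorem card_transversal (t : Fin m → Fin n) : (transversal t).card = m := by
  rw [transversal, Finset.card_image_of_injective _ fun i i' h => by simp_all]
  simp

theorem card_le_of_blockSlice_nonempty {B : Finset (Fin (m * n))}
    (hB : ∀ i, (blockSlice B i).Nonempty) : m ≤ B.card := by
  simpa using Finset.card_le_card_of_surjOn (fun k => (finProdFinEquiv.symm k).1)
    (t := Finset.univ) fun i _ => by
      obtain ⟨j, hj⟩ := hB i
      exact ⟨_, (Finset.mem_filter.mp hj).2, by simp⟩

theorem exists_transversal_eq {A : Finset (Fin (m * n))} (hA : A.card = m)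
    (hslice : ∀ i, (blockSlice A i).Nonempty) : ∃ t, transversal t = A := by
  choose t ht using hslice
  refine ⟨t, Finset.eq_of_subset_of_card_le ?_ (by rw [hA, card_transversal])⟩
  simpa [transversal, Finset.image_subset_iff, blockSlice] using ht

theorem sum_card_eq_eq_sum_transversal {M : Type*} [AddCommMonoid M]
    (w : Finset (Fin (m * n)) → M) (hw : ∀ B i, blockSlice B i = ∅ → w B = 0) :
    ∑ A ∈ Finset.univ.filter (fun A : Finset (Fin (m * n)) => A.card = m), w A =
      ∑ t : Fin m → Fin n, w (transversal t) := by
  classical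
  rw [← Finset.sum_image fun t _ t' _ h => transversal_injective h]
  refine (Finset.sum_subset (fun A hA => ?_) fun A hA hA' => ?_).symm
  · obtain ⟨t, -, rfl⟩ := Finset.mem_image.mp hA
    simpa using card_transversal t
  · have hcard : A.card = m := (Finset.mem_filter.mp hA).2
    by_contra hne
    have hslice : ∀ i, (blockSlice A i).Nonempty := fun i =>
      Finset.nonempty_iff_ne_empty.mpr fun h => hne (hw A i h)
    obtain ⟨t, rfl⟩ := exists_transversal_eq hcard hslice
    exact hA' (Finset.mem_image_of_mem _ (Finset.mem_univ t))

theorem hoeffdingSum_prod_blockEquiv_ae_eq (μ : Measure Ω) [IsProbabilityMeasure μ]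
    {f : (Fin n → Ω) → ℝ} (hf : Integrable f (piMeasure μ n))
    (hmean : ∫ x, f x ∂(piMeasure μ n) = 0) :
    hoeffdingSum μ m (fun x => ∏ i, f (blockEquiv Ω m n x i)) =ᵐ[piMeasure μ (m * n)]
      fun x => ∏ i, hoeffdingSum μ 1 f (blockEquiv Ω m n x i) := by
  have hblock := measurePreserving_blockEquiv (m := m) (n := n) μ
  have hF : Integrable (fun x => ∏ i, f (blockEquiv Ω m n x i)) (piMeasure μ (m * n)) :=
    (hblock.integrable_comp_emb (blockEquiv Ω m n).measurableEmbedding).mpr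
      (Integrable.fintype_prod fun _ => hf)
  set w : Finset (Fin (m * n)) → (Fin (m * n) → Ω) → ℝ :=
    fun B x => ∏ i, integralOutside μ (blockSlice B i) f (blockEquiv Ω m n x i)
  have hw : ∀ B i, blockSlice B i = ∅ → w B = 0 := fun B i hi => funext fun x =>
    Finset.prod_eq_zero (Finset.mem_univ i) (by simp [hi, hmean])
  have hw_card : ∀ B : Finset (Fin (m * n)), B.card < m → w B = 0 := fun B hB => by
    by_contra hne
    exact (card_le_of_blockSlice_nonempty fun i =>
      Finset.nonempty_iff_ne_empty.mpr fun h => hne (hw B i h)).not_gt hB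
  have hP1 : ∀ᵐ x ∂(piMeasure μ (m * n)), ∀ i, hoeffdingSum μ 1 f (blockEquiv Ω m n x i) =
      ∑ j, integralOutside μ {j} f (blockEquiv Ω m n x i) := ae_all_iff.mpr fun i =>
    (((measurePreserving_eval _ i).comp hblock).quasiMeasurePreserving.ae_eq_comp
      (hoeffdingSum_one_ae_eq μ hf hmean)).mono fun x hx => by simpa using hx
  have hexpand := hoeffdingSum_ae_eq_of_condExpCoords_ae_eq μ m fun B =>
    condExpCoords_ae_eq_integralOutside μ B hF
  simp_rw [funext (integralOutside_prod_blockEquiv μ f _)] at hexpand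
  rw [Finset.sum_alternating_powerset_eq_of_card_lt m w hw_card,
    sum_card_eq_eq_sum_transversal w hw] at hexpand
  filter_upwards [hexpand, hP1] with x hx hx1
  simp only [hx, hx1, Finset.sum_apply, w, blockSlice_transversal, Finset.prod_univ_sum,
    Fintype.piFinset_univ]

end Blocks

/-- for mean-zero `f ∈ L²(Ω^n)` and `F = f^{⊗m}` on `Ω^{mn}` (blocks of `n`
consecutive coordinates), `P_m F = (P_1 f)^{⊗m}` almost everywhere. -/
theorem hoeffding_tensor_power (Ω : Type*) [MeasurableSpace Ω] (μ : Measure Ω)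
    [IsProbabilityMeasure μ] (n m : ℕ)
    (f : (Fin n → Ω) → ℝ) (hf : MemLp f 2 (piMeasure μ n))
    (hmean : ∫ x, f x ∂(piMeasure μ n) = 0)
    (F : (Fin (m * n) → Ω) → ℝ)
    (hF : F = fun x => ∏ i : Fin m, f (fun j : Fin n =>
      x ⟨(i : ℕ) * n + (j : ℕ), by
        have h1 : (i : ℕ) + 1 ≤ m := i.isLt
        have h2 : (j : ℕ) < n := j.isLt
        calc (i : ℕ) * n + (j : ℕ) < (i : ℕ) * n + n := by omega
          _ = ((i : ℕ) + 1) * n := by ring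
          _ ≤ m * n := Nat.mul_le_mul_right n h1⟩)) :
    hoeffdingSum μ m F =ᵐ[piMeasure μ (m * n)]
      fun x => ∏ i : Fin m, (hoeffdingSum μ 1 f) (fun j : Fin n =>
        x ⟨(i : ℕ) * n + (j : ℕ), by
          have h1 : (i : ℕ) + 1 ≤ m := i.isLt
          have h2 : (j : ℕ) < n := j.isLt
          calc (i : ℕ) * n + (j : ℕ) < (i : ℕ) * n + n := by omega
            _ = ((i : ℕ) + 1) * n := by ring
            _ ≤ m * n := Nat.mul_le_mul_right n h1⟩) := by
  simp only [Fin.mk_mul_add_eq_finProdFinEquiv] at hF ⊢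
  subst hF
  exact hoeffdingSum_prod_blockEquiv_ae_eq μ (hf.integrable one_le_two) hmean
end

section
/- Let X₁,…,X_n be independent integrable real random variables on a probability space, and define constants λ₀ = 0 and λ_k = E√(X_k² + λ_{k−1}²) for k = 1,…,n. Then λ_n ≤ E√(Σ_{k=1}^n X_k²) ≤ 2 λ_n. -/
/-!
Put `R m = √(X₁² + ⋯ + X_m²)`, so that `R (m+1) = √(X_{m+1}² + (R m)²)` with `X_{m+1}`
independent of `R m`. For the lower bound, `r ↦ √(a² + r²)` is convex, so Jensen's inequality
in the variable independent of `X_{m+1}` gives `E R (m+1) ≥ E √(X_{m+1}² + (E R m)²)`, and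
`E R m ≥ λ_m` by induction. For the upper bound, `r ↦ √(a² + r²)` is `1`-Lipschitz, so
`(R (m+1) - λ_{m+1})⁺ ≤ (R m - λ_m)⁺ + (√(X_{m+1}² + λ_m²) - λ_{m+1})⁺`; the last term has the
same mean as `(λ_{m+1} - √(X_{m+1}² + λ_m²))⁺ ≤ λ_{m+1} - λ_m`. Hence `E (R m - λ_m)⁺ ≤ λ_m`
telescopes, and `E R n ≤ λ_n + E (R n - λ_n)⁺ ≤ 2 λ_n`.
-/

open MeasureTheory ProbabilityTheory

lemma sqrt_sq_add_sq_le_abs_add_abs (a b : ℝ) : √(a ^ 2 + b ^ 2) ≤ |a| + |b| :=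
  (Real.sqrt_le_left (by positivity)).2 <| by
    nlinarith [abs_nonneg a, abs_nonneg b, sq_abs a, sq_abs b]

lemma sqrt_sq_add_sq_le_add_posPart (a : ℝ) {v : ℝ} (hv : 0 ≤ v) (ℓ : ℝ) :
    √(a ^ 2 + v ^ 2) ≤ √(a ^ 2 + ℓ ^ 2) + max (v - ℓ) 0 := by
  rcases le_total v ℓ with hvℓ | hℓv
  · have : v ^ 2 ≤ ℓ ^ 2 := by nlinarith
    have : √(a ^ 2 + v ^ 2) ≤ √(a ^ 2 + ℓ ^ 2) := by gcongr
    linarith [le_max_right (v - ℓ) 0]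
  · rw [max_eq_left (sub_nonneg.2 hℓv), ← Complex.norm_add_mul_I, ← Complex.norm_add_mul_I]
    calc ‖(a : ℂ) + v * Complex.I‖
        = ‖((a : ℂ) + ℓ * Complex.I) + ((v - ℓ : ℝ) : ℂ) * Complex.I‖ := by push_cast; ring_nf
      _ ≤ _ := norm_add_le _ _
      _ = _ := by
          rw [norm_mul, Complex.norm_I, mul_one, Complex.norm_real,
            Real.norm_of_nonneg (sub_nonneg.2 hℓv)]

lemma sq_add_mul_div_sqrt_le (a t r : ℝ) :
    (a ^ 2 + t * r) / √(a ^ 2 + t ^ 2) ≤ √(a ^ 2 + r ^ 2) := by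
  rcases (Real.sqrt_nonneg (a ^ 2 + t ^ 2)).eq_or_lt with h | h
  · rw [← h, div_zero]; positivity
  rw [div_le_iff₀ h, ← Real.sqrt_mul (by positivity)]
  exact (le_abs_self _).trans <| Real.abs_le_sqrt <| by nlinarith [sq_nonneg (a * (r - t))]

section

variable {Ω : Type*} [MeasurableSpace Ω] {μ : Measure Ω}

lemma MeasureTheory.Integrable.sqrt_sq_add_sq {A B : Ω → ℝ} (hA : Integrable A μ)
    (hB : Integrable B μ) :
    Integrable (fun ω ↦ √(A ω ^ 2 + B ω ^ 2)) μ := by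
  refine (hA.abs.add hB.abs).mono' ?_ (.of_forall fun ω ↦ ?_)
  · exact Real.continuous_sqrt.comp_aestronglyMeasurable ((hA.1.pow 2).add (hB.1.pow 2))
  · rw [Real.norm_of_nonneg (Real.sqrt_nonneg _)]
    exact sqrt_sq_add_sq_le_abs_add_abs _ _

lemma integral_posPart_sub_integral_le [IsProbabilityMeasure μ] {Y : Ω → ℝ}
    (hY : Integrable Y μ) {ℓ : ℝ} (hℓ : ∀ ω, ℓ ≤ Y ω) :
    ∫ ω, max (Y ω - ∫ ω', Y ω' ∂μ) 0 ∂μ ≤ ∫ ω, Y ω ∂μ - ℓ := by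
  set c := ∫ ω, Y ω ∂μ
  have hℓc : ℓ ≤ c := by simpa using integral_mono (integrable_const ℓ) hY hℓ
  have hsplit : ∀ ω, max (Y ω - c) 0 = (Y ω - c) + max (c - Y ω) 0 := fun ω ↦ by
    have := max_zero_sub_max_neg_zero_eq_self (Y ω - c)
    rw [neg_sub] at this
    linarith
  have hneg : Integrable (fun ω ↦ max (c - Y ω) 0) μ := ((integrable_const c).sub hY).pos_part
  calc ∫ ω, max (Y ω - c) 0 ∂μ = ∫ ω, (Y ω - c) ∂μ + ∫ ω, max (c - Y ω) 0 ∂μ := by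
        simp_rw [hsplit]; exact integral_add (hY.sub (integrable_const c)) hneg
    _ = ∫ ω, max (c - Y ω) 0 ∂μ := by simp [integral_sub hY (integrable_const c), c]
    _ ≤ ∫ _ω, (c - ℓ) ∂μ :=
        integral_mono hneg (integrable_const _) fun ω ↦ max_le (by linarith [hℓ ω]) (by linarith)
    _ = c - ℓ := by simp

/-- Jensen's inequality for the convex map `r ↦ √(a² + r²)`, conditionally on `A`: this map lies
above its tangent line at `r = E R`, whose slope `q a` depends on `a` only, so by independence the
linear term `q A * (E R - R)` has mean zero. -/
lemma ProbabilityTheory.IndepFun.integral_sqrt_sq_add_sq_integral_le [IsProbabilityMeasure μ]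
    {A R : Ω → ℝ} (hAR : IndepFun A R μ) (hA : Integrable A μ) (hR : Integrable R μ) :
    ∫ ω, √(A ω ^ 2 + (∫ ω', R ω' ∂μ) ^ 2) ∂μ ≤ ∫ ω, √(A ω ^ 2 + R ω ^ 2) ∂μ := by
  set t := ∫ ω, R ω ∂μ
  set q : ℝ → ℝ := fun a ↦ t / √(a ^ 2 + t ^ 2)
  have hq_meas : Measurable q := by fun_prop
  have hq_le : ∀ a, ‖q a‖ ≤ 1 := fun a ↦ by
    rw [Real.norm_eq_abs, abs_div, abs_of_nonneg (Real.sqrt_nonneg _)]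
    exact div_le_one_of_le₀ (Real.abs_le_sqrt (le_add_of_nonneg_left (sq_nonneg a)))
      (Real.sqrt_nonneg _)
  have hsplit : ∀ a r, √(a ^ 2 + t ^ 2) - q a * (t - r) = (a ^ 2 + t * r) / √(a ^ 2 + t ^ 2) :=
    fun a r ↦ by
      calc √(a ^ 2 + t ^ 2) - q a * (t - r)
          = (a ^ 2 + t ^ 2) / √(a ^ 2 + t ^ 2) - q a * (t - r) := by rw [Real.div_sqrt]
        _ = _ := by ring
  have hcentred : Integrable (fun ω ↦ t - R ω) μ := (integrable_const t).sub hR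
  have hcross_int : Integrable (fun ω ↦ q (A ω) * (t - R ω)) μ :=
    hcentred.bdd_mul (hq_meas.comp_aemeasurable hA.1.aemeasurable).aestronglyMeasurable
      (.of_forall fun ω ↦ hq_le (A ω))
  have hcross : ∫ ω, q (A ω) * (t - R ω) ∂μ = 0 := by
    have := (hAR.comp hq_meas (measurable_const_sub t)).integral_mul_eq_mul_integral
      (hq_meas.comp_aemeasurable hA.1.aemeasurable).aestronglyMeasurable hcentred.1
    simp only [Pi.mul_apply, Function.comp_apply] at this
    rw [this, integral_sub (integrable_const t) hR]
    simp [t]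
  calc ∫ ω, √(A ω ^ 2 + t ^ 2) ∂μ
      = ∫ ω, (√(A ω ^ 2 + t ^ 2) - q (A ω) * (t - R ω)) ∂μ := by
        rw [integral_sub (hA.sqrt_sq_add_sq (integrable_const t)) hcross_int, hcross, sub_zero]
    _ ≤ ∫ ω, √(A ω ^ 2 + R ω ^ 2) ∂μ :=
        integral_mono ((hA.sqrt_sq_add_sq (integrable_const t)).sub hcross_int)
          (hA.sqrt_sq_add_sq hR) fun ω ↦ (hsplit _ _).trans_le (sq_add_mul_div_sqrt_le _ _ _)

/-- `ℓ ≤ E R` and `E (R - ℓ)⁺ ≤ ℓ`. Together these give `E R ≤ 2ℓ`, and unlike that bound they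
carry over from `R` to `√(A² + R²)` when `A` is independent of `R`. -/
structure IsMeanExcessBound (μ : Measure Ω) (R : Ω → ℝ) (ℓ : ℝ) : Prop where
  integrable : Integrable R μ
  le_integral : ℓ ≤ ∫ ω, R ω ∂μ
  integral_posPart_sub_le : ∫ ω, max (R ω - ℓ) 0 ∂μ ≤ ℓ

namespace IsMeanExcessBound

lemma integral_le_two_mul [IsProbabilityMeasure μ] {R : Ω → ℝ} {ℓ : ℝ}
    (h : IsMeanExcessBound μ R ℓ) : ∫ ω, R ω ∂μ ≤ 2 * ℓ := by
  have hexcess : Integrable (fun ω ↦ max (R ω - ℓ) 0) μ :=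
    (h.integrable.sub (integrable_const ℓ)).pos_part
  calc ∫ ω, R ω ∂μ ≤ ∫ ω, (ℓ + max (R ω - ℓ) 0) ∂μ :=
        integral_mono h.integrable ((integrable_const ℓ).add hexcess) fun ω ↦ by
          linarith [le_max_left (R ω - ℓ) 0]
    _ = ℓ + ∫ ω, max (R ω - ℓ) 0 ∂μ := by simp [integral_add (integrable_const ℓ) hexcess]
    _ ≤ 2 * ℓ := by linarith [h.integral_posPart_sub_le]

lemma sqrt_sq_add_sq [IsProbabilityMeasure μ] {A R : Ω → ℝ} {ℓ ℓ' : ℝ}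
    (h : IsMeanExcessBound μ R ℓ) (hAR : IndepFun A R μ) (hA : Integrable A μ)
    (hR0 : ∀ ω, 0 ≤ R ω) (hℓ' : ℓ' = ∫ ω, √(A ω ^ 2 + ℓ ^ 2) ∂μ) :
    IsMeanExcessBound μ (fun ω ↦ √(A ω ^ 2 + R ω ^ 2)) ℓ' := by
  obtain ⟨hR, hlow, hup⟩ := h
  have hℓ0 : 0 ≤ ℓ := (integral_nonneg fun ω ↦ le_max_right _ _).trans hup
  have hY : Integrable (fun ω ↦ √(A ω ^ 2 + ℓ ^ 2)) μ := hA.sqrt_sq_add_sq (integrable_const ℓ)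
  have hYR : Integrable (fun ω ↦ √(A ω ^ 2 + R ω ^ 2)) μ := hA.sqrt_sq_add_sq hR
  refine ⟨hYR, ?_, ?_⟩
  · calc ℓ' ≤ ∫ ω, √(A ω ^ 2 + (∫ ω', R ω' ∂μ) ^ 2) ∂μ := hℓ' ▸
          integral_mono hY (hA.sqrt_sq_add_sq (integrable_const _)) fun ω ↦ by gcongr
      _ ≤ _ := hAR.integral_sqrt_sq_add_sq_integral_le hA hR
  · have hYℓ : ∀ ω, ℓ ≤ √(A ω ^ 2 + ℓ ^ 2) := fun ω ↦
      (le_abs_self ℓ).trans (Real.abs_le_sqrt (le_add_of_nonneg_left (sq_nonneg _)))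
    have hpoint : ∀ ω, max (√(A ω ^ 2 + R ω ^ 2) - ℓ') 0
        ≤ max (R ω - ℓ) 0 + max (√(A ω ^ 2 + ℓ ^ 2) - ℓ') 0 := fun ω ↦ by
      have := sqrt_sq_add_sq_le_add_posPart (A ω) (hR0 ω) ℓ
      exact max_le (by linarith [le_max_left (√(A ω ^ 2 + ℓ ^ 2) - ℓ') 0]) (by positivity)
    have hRℓ : Integrable (fun ω ↦ max (R ω - ℓ) 0) μ := (hR.sub (integrable_const ℓ)).pos_part
    have hYℓ' : Integrable (fun ω ↦ max (√(A ω ^ 2 + ℓ ^ 2) - ℓ') 0) μ :=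
      (hY.sub (integrable_const ℓ')).pos_part
    calc ∫ ω, max (√(A ω ^ 2 + R ω ^ 2) - ℓ') 0 ∂μ
        ≤ ∫ ω, (max (R ω - ℓ) 0 + max (√(A ω ^ 2 + ℓ ^ 2) - ℓ') 0) ∂μ :=
          integral_mono (hYR.sub (integrable_const ℓ')).pos_part (hRℓ.add hYℓ') hpoint
      _ = ∫ ω, max (R ω - ℓ) 0 ∂μ + ∫ ω, max (√(A ω ^ 2 + ℓ ^ 2) - ℓ') 0 ∂μ :=
          integral_add hRℓ hYℓ'
      _ ≤ ℓ + (ℓ' - ℓ) := add_le_add hup (hℓ' ▸ integral_posPart_sub_integral_le hY hYℓ)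
      _ = ℓ' := by ring

end IsMeanExcessBound

lemma ProbabilityTheory.iIndepFun.indepFun_init_last {β : Type*} [MeasurableSpace β] {n : ℕ}
    {X : Fin (n + 1) → Ω → β} (h : iIndepFun X μ) (hX : ∀ k, Measurable (X k)) :
    IndepFun (fun ω ↦ Fin.init (X · ω)) (X (Fin.last n)) μ := by
  have h' := h.indepFun_finset (Finset.univ.map Fin.castSuccEmb) {Fin.last n} (by simp) hX
  refine h'.comp (φ := fun v (k : Fin n) ↦ v ⟨_, Finset.mem_map_of_mem _ (Finset.mem_univ k)⟩)
    (ψ := fun v ↦ v ⟨_, Finset.mem_singleton_self _⟩) ?_ ?_ <;> fun_prop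

lemma isMeanExcessBound_sqrt_sum_sq [IsProbabilityMeasure μ] {n : ℕ} {X : Fin n → Ω → ℝ}
    (hmeas : ∀ k, Measurable (X k)) (hint : ∀ k, Integrable (X k) μ) (hindep : iIndepFun X μ)
    {lam : ℕ → ℝ} (h0 : lam 0 = 0)
    (hrec : ∀ k : Fin n, lam (k + 1) = ∫ ω, √(X k ω ^ 2 + lam k ^ 2) ∂μ) :
    IsMeanExcessBound μ (fun ω ↦ √(∑ k, X k ω ^ 2)) (lam n) := by
  induction n with
  | zero => exact ⟨by simp, by simp [h0], by simp [h0]⟩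
  | succ n ih =>
    have hinit := ih (X := fun k ↦ X k.castSucc) (fun k ↦ hmeas _) (fun k ↦ hint _)
      (hindep.precomp (Fin.castSucc_injective n)) (fun k ↦ hrec k.castSucc)
    have hlast : IndepFun (X (Fin.last n)) (fun ω ↦ √(∑ k : Fin n, X k.castSucc ω ^ 2)) μ :=
      ((hindep.indepFun_init_last hmeas).comp (φ := fun v : Fin n → ℝ ↦ √(∑ k, v k ^ 2)) (ψ := id)
        (by fun_prop) measurable_id).symm
    have hsum : ∀ ω, √(∑ k, X k ω ^ 2)
        = √(X (Fin.last n) ω ^ 2 + √(∑ k : Fin n, X k.castSucc ω ^ 2) ^ 2) := fun ω ↦ by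
      rw [Fin.sum_univ_castSucc, Real.sq_sqrt (by positivity), add_comm]
    simp_rw [hsum]
    exact hinit.sqrt_sq_add_sq hlast (hint _) (fun ω ↦ Real.sqrt_nonneg _) (hrec (Fin.last n))

end

/-- for independent integrable random variables `X₁,…,X_n` and the
constants `λ₀ = 0`, `λ_k = E√(X_k² + λ_{k−1}²)`, one has
`λ_n ≤ E√(Σ_k X_k²) ≤ 2λ_n`. -/
theorem telescoping_square_function_comparison
    (Ω : Type*) [MeasurableSpace Ω] (μ : Measure Ω) [IsProbabilityMeasure μ]
    (n : ℕ) (X : Fin n → Ω → ℝ)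
    (hmeas : ∀ k, Measurable (X k))
    (hint : ∀ k, Integrable (X k) μ)
    (hindep : ProbabilityTheory.iIndepFun X μ)
    (lam : ℕ → ℝ) (h0 : lam 0 = 0)
    (hrec : ∀ k : Fin n, lam ((k : ℕ) + 1)
      = ∫ ω, Real.sqrt ((X k ω) ^ 2 + (lam (k : ℕ)) ^ 2) ∂μ) :
    lam n ≤ ∫ ω, Real.sqrt (∑ k : Fin n, (X k ω) ^ 2) ∂μ ∧
      ∫ ω, Real.sqrt (∑ k : Fin n, (X k ω) ^ 2) ∂μ ≤ 2 * lam n := by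
  have h := isMeanExcessBound_sqrt_sum_sq hmeas hint hindep h0 hrec
  exact ⟨h.le_integral, h.integral_le_two_mul⟩
end
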